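/- Let G be a finite simple graph with vertex s, and let S ⊆ ℕ be a finite set. Let G⁺ be obtained from G by adding a new vertex v adjacent to s and, for each m ∈ S, adding a fresh disjoint copy of the tree t(m) with v joined by an edge to its root. Then g(G⁺, v) = mex(S ∪ {g(G,s)}). -/

import Mathlib

noncomputable def mex (s : Finset ℕ) : ℕ := sInf {n : ℕ | n ∉ s}

noncomputable def geo {V : Type} [DecidableEq V] (G : SimpleGraph V) [DecidableRel G.Adj]
    (A : Finset V) (s : V) : ℕ :=
  if h : s ∈ A then
    mex (((A.erase s).filter (fun v => G.Adj s v)).image (fun v => geo G (A.erase s) v))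
  else 0
termination_by A.card
decreasing_by
  simp_wf
  exact Finset.card_erase_lt_of_mem h

/-- Parent-child relation of the binomial trees: `T` is a child of `S` iff `T` is obtained
from `S` by inserting a new element larger than everything in `S`.  The induced graph on
the powerset of `range m` is (an isomorphic copy of) the recursively defined tree `t(m)`,
rooted at `∅`, whose root is joined to the roots of copies of `t(0), …, t(m−1)`. -/
def treeRel (S T : Finset ℕ) : Prop :=
  ∃ k ∈ T, k ∉ S ∧ (∀ j ∈ S, j < k) ∧ T = insert k S

instance : DecidableRel treeRel := fun S T => by
  unfold treeRel; infer_instance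

/-- Vertices of the augmented graph `G⁺`: the original vertices of `G`, the new vertex `v`
(the `Unit` summand), and vertices `(m, T)` of a copy of the tree `t(m)` for each `m`. -/
abbrev PlusV (V : Type) : Type := V ⊕ Unit ⊕ (ℕ × Finset ℕ)

/-- Base edge relation of `G⁺`: edges of `G`; an edge from `s` to the new vertex `v`;
edges from `v` to the root `(m, ∅)` of each tree copy; and the tree edges within a copy. -/
def plusRel {V : Type} (G : SimpleGraph V) (s : V) : PlusV V → PlusV V → Prop
  | Sum.inl u, Sum.inl w => G.Adj u w
  | Sum.inl u, Sum.inr (Sum.inl _) => u = s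
  | Sum.inr (Sum.inl _), Sum.inr (Sum.inr (_, T)) => T = ∅
  | Sum.inr (Sum.inr (m, T)), Sum.inr (Sum.inr (m', T')) => m = m' ∧ treeRel T T'
  | _, _ => False

instance {V : Type} [DecidableEq V] (G : SimpleGraph V) [DecidableRel G.Adj] (s : V) :
    DecidableRel (plusRel G s) := fun u w => by
  rcases u with u | u | ⟨m, T⟩ <;> rcases w with w | w | ⟨m', T'⟩ <;>
    simp only [plusRel] <;> infer_instance

/-- The augmented graph `G⁺` (as a graph on the ambient vertex type `PlusV V`). -/
def plusGraph {V : Type} (G : SimpleGraph V) (s : V) : SimpleGraph (PlusV V) where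
  Adj u w := u ≠ w ∧ (plusRel G s u w ∨ plusRel G s w u)
  symm := ⟨fun u w h => ⟨h.1.symm, h.2.symm⟩⟩
  loopless := ⟨fun u h => h.1 rfl⟩

instance {V : Type} [DecidableEq V] (G : SimpleGraph V) [DecidableRel G.Adj] (s : V) :
    DecidableRel (plusGraph G s).Adj := fun u w =>
  inferInstanceAs (Decidable (u ≠ w ∧ (plusRel G s u w ∨ plusRel G s w u)))

/-- The vertex set of `G⁺`: all vertices of `G`, the new vertex `v`, and for each `m ∈ S`
a fresh disjoint copy of the tree `t(m)` (whose vertex set is the powerset of `range m`). -/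
def plusVerts (V : Type) [Fintype V] [DecidableEq V] (S : Finset ℕ) : Finset (PlusV V) :=
  (Finset.univ.image (Sum.inl : V → PlusV V)) ∪ {Sum.inr (Sum.inl ())} ∪
    S.biUnion (fun m => ((Finset.range m).powerset).image
      (fun T => (Sum.inr (Sum.inr (m, T)) : PlusV V)))

/-!
Once `v` is removed, no edge joins `G` or a tree copy to anything else, and the Grundy value
of a vertex only depends, up to graph embedding, on a vertex set containing it that is closed
under adjacency. So the options of `v` have the values `g(G, s)` and `g(t(m), root)`, `m ∈ S`.

In the model of `t(m)` on subsets of `range m`, where the children of `T` are `insert k T` for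
`max T < k < m`, the value of `T` in any position containing all its descendants but not its
parent is `m - (max T + 1)` (`m` at the root): its options are its children, whose values are
by induction exactly `0, …, m - max T - 2`.
-/

lemma mex_range (c : ℕ) : mex (Finset.range c) = c := by
  refine le_antisymm (Nat.sInf_le (by simp)) (le_csInf ⟨c, by simp⟩ fun n hn => ?_)
  simpa using hn

section Geography

variable {V W : Type} [DecidableEq V] [DecidableEq W]
  (G : SimpleGraph V) [DecidableRel G.Adj] (G' : SimpleGraph W) [DecidableRel G'.Adj]

lemma geo_of_mem {A : Finset V} {s : V} (hs : s ∈ A) :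
    geo G A s = mex (((A.erase s).filter (G.Adj s)).image (geo G (A.erase s))) := by
  rw [geo, dif_pos hs]

lemma geo_map (f : G ↪g G') (B : Finset V) (u : V) :
    geo G' (B.map f.toEmbedding) (f u) = geo G B u := by
  induction B using Finset.strongInduction generalizing u with
  | _ B ih =>
    by_cases hu : u ∈ B
    · have hfu : f u ∈ B.map f.toEmbedding := Finset.mem_map_of_mem _ hu
      have herase : (B.map f.toEmbedding).erase (f u) = (B.erase u).map f.toEmbedding :=
        (Finset.map_erase _ _ _).symm
      rw [geo_of_mem G hu, geo_of_mem G' hfu, herase, Finset.filter_map,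
        Finset.map_eq_image f.toEmbedding (Finset.filter _ _), Finset.image_image]
      have hadj : (B.erase u).filter (G'.Adj (f u) ∘ f.toEmbedding) =
          (B.erase u).filter (G.Adj u) :=
        Finset.filter_congr fun _ _ => f.map_adj_iff
      rw [hadj]
      exact congrArg mex (Finset.image_congr fun x _ => ih _ (Finset.erase_ssubset hu) x)
    · have hfu : f u ∉ B.map f.toEmbedding := by simpa using hu
      rw [geo, dif_neg hfu, geo, dif_neg hu]

lemma geo_eq_of_subset {A B : Finset V} (hBA : B ⊆ A)
    (hB : ∀ x ∈ B, ∀ w ∈ A, G.Adj x w → w ∈ B) {u : V} (hu : u ∈ B) :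
    geo G A u = geo G B u := by
  induction B using Finset.strongInduction generalizing A u with
  | _ B ih =>
    have hnbr : (A.erase u).filter (G.Adj u) = (B.erase u).filter (G.Adj u) := by
      ext w
      simp only [Finset.mem_filter, Finset.mem_erase]
      constructor
      · rintro ⟨⟨hwu, hwA⟩, hadj⟩
        exact ⟨⟨hwu, hB u hu w hwA hadj⟩, hadj⟩
      · rintro ⟨⟨hwu, hwB⟩, hadj⟩
        exact ⟨⟨hwu, hBA hwB⟩, hadj⟩
    have hB' : ∀ x ∈ B.erase u, ∀ w ∈ A.erase u, G.Adj x w → w ∈ B.erase u :=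
      fun x hx w hw hadj => Finset.mem_erase.2
        ⟨Finset.ne_of_mem_erase hw, hB x (Finset.mem_of_mem_erase hx) w
          (Finset.mem_of_mem_erase hw) hadj⟩
    rw [geo_of_mem G (hBA hu), geo_of_mem G hu, hnbr]
    exact congrArg mex (Finset.image_congr fun w hw => ih _ (Finset.erase_ssubset hu)
      (Finset.erase_subset_erase u hBA) hB' (Finset.mem_filter.1 hw).1)

end Geography

section Tree

lemma lt_of_sup_succ_le {S : Finset ℕ} {j k : ℕ} (hk : S.sup (· + 1) ≤ k) (hj : j ∈ S) :
    j < k :=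
  Nat.add_one_le_iff.1 (Finset.sup_le_iff.1 hk j hj)

lemma notMem_of_sup_succ_le {S : Finset ℕ} {k : ℕ} (hk : S.sup (· + 1) ≤ k) : k ∉ S :=
  fun h => (lt_of_sup_succ_le hk h).false

lemma treeRel_iff {S T : Finset ℕ} :
    treeRel S T ↔ ∃ k, S.sup (· + 1) ≤ k ∧ T = insert k S := by
  simp only [treeRel, Finset.sup_le_iff, Nat.add_one_le_iff]
  constructor
  · rintro ⟨k, -, -, hk, rfl⟩
    exact ⟨k, hk, rfl⟩
  · rintro ⟨k, hk, rfl⟩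
    exact ⟨k, Finset.mem_insert_self k S, fun h => (hk k h).false, hk, rfl⟩

lemma treeRel_unique {S S' T : Finset ℕ} (h : treeRel S T) (h' : treeRel S' T) : S = S' := by
  obtain ⟨k, hk, rfl⟩ := treeRel_iff.1 h
  obtain ⟨k', hk', heq⟩ := treeRel_iff.1 h'
  have hkk' : k = k' := by
    have h1 : k' ∈ insert k S := heq ▸ Finset.mem_insert_self k' S'
    have h2 : k ∈ insert k' S' := heq ▸ Finset.mem_insert_self k S
    rcases Finset.mem_insert.1 h1 with h1 | h1 <;> rcases Finset.mem_insert.1 h2 with h2 | h2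
    all_goals first
      | omega
      | have := lt_of_sup_succ_le hk h1; have := lt_of_sup_succ_le hk' h2; omega
  subst hkk'
  rw [← Finset.erase_insert (notMem_of_sup_succ_le hk), heq,
    Finset.erase_insert (notMem_of_sup_succ_le hk')]

lemma sup_succ_insert {S : Finset ℕ} {k : ℕ} (hk : S.sup (· + 1) ≤ k) :
    (insert k S).sup (· + 1) = k + 1 := by
  rw [Finset.sup_insert]
  exact sup_eq_left.2 (hk.trans (Nat.le_succ k))

lemma image_Ico_tsub_succ (b n : ℕ) :
    (Finset.Ico b n).image (fun k => n - (k + 1)) = Finset.range (n - b) := by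
  ext x
  simp only [Finset.mem_image, Finset.mem_Ico, Finset.mem_range]
  constructor
  · rintro ⟨k, hk, rfl⟩
    omega
  · exact fun hx => ⟨n - 1 - x, by omega, by omega⟩

abbrev treeGraph : SimpleGraph (Finset ℕ) := SimpleGraph.fromRel treeRel

section Descendants

variable {n : ℕ} {A : Finset (Finset ℕ)} {T : Finset ℕ}

-- `T.sup (· + 1)` is `max T + 1` (and `0` for `T = ∅`): the children of `T` are the
-- `insert k T` with `T.sup (· + 1) ≤ k`, and its descendants the `T ∪ U` with `U` above it.
lemma insert_mem_erase_of_descendants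
    (hdesc : ∀ U ⊆ Finset.Ico (T.sup (· + 1)) n, T ∪ U ∈ A) {k : ℕ}
    (hk : k ∈ Finset.Ico (T.sup (· + 1)) n) : insert k T ∈ A.erase T := by
  have hkT := notMem_of_sup_succ_le (Finset.mem_Ico.1 hk).1
  refine Finset.mem_erase.2 ⟨fun h => hkT (h ▸ Finset.mem_insert_self k T), ?_⟩
  simpa using hdesc {k} (Finset.singleton_subset_iff.2 hk)

lemma filter_treeGraph_adj_erase (hA : ∀ X ∈ A, X ⊆ Finset.range n)
    (hparent : ∀ X ∈ A, ¬ treeRel X T)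
    (hdesc : ∀ U ⊆ Finset.Ico (T.sup (· + 1)) n, T ∪ U ∈ A) :
    (A.erase T).filter (treeGraph.Adj T) = (Finset.Ico (T.sup (· + 1)) n).image (insert · T) := by
  ext X
  simp only [Finset.mem_filter, Finset.mem_image, treeGraph, SimpleGraph.fromRel_adj]
  constructor
  · rintro ⟨hX, -, hrel | hrel⟩
    · obtain ⟨k, hk, rfl⟩ := treeRel_iff.1 hrel
      have hkn : k < n := Finset.mem_range.1
        (hA _ (Finset.mem_of_mem_erase hX) (Finset.mem_insert_self k T))
      exact ⟨k, Finset.mem_Ico.2 ⟨hk, hkn⟩, rfl⟩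
    · exact absurd hrel (hparent X (Finset.mem_of_mem_erase hX))
  · rintro ⟨k, hk, rfl⟩
    have hX := insert_mem_erase_of_descendants hdesc hk
    exact ⟨hX, (Finset.ne_of_mem_erase hX).symm,
      Or.inl (treeRel_iff.2 ⟨k, (Finset.mem_Ico.1 hk).1, rfl⟩)⟩

theorem geo_treeGraph (hT : T ∈ A) (hA : ∀ X ∈ A, X ⊆ Finset.range n)
    (hparent : ∀ X ∈ A, ¬ treeRel X T)
    (hdesc : ∀ U ⊆ Finset.Ico (T.sup (· + 1)) n, T ∪ U ∈ A) :
    geo treeGraph A T = n - T.sup (· + 1) := by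
  induction A using Finset.strongInduction generalizing T with
  | _ A ih =>
    have hval : ∀ k ∈ Finset.Ico (T.sup (· + 1)) n,
        geo treeGraph (A.erase T) (insert k T) = n - (k + 1) := by
      intro k hk
      have hbk := (Finset.mem_Ico.1 hk).1
      have hkT := notMem_of_sup_succ_le hbk
      rw [← sup_succ_insert hbk]
      refine ih _ (Finset.erase_ssubset hT) (insert_mem_erase_of_descendants hdesc hk)
        (fun X hX => hA X (Finset.mem_of_mem_erase hX)) (fun X hX hrel => ?_) (fun U hU => ?_)
      · exact Finset.ne_of_mem_erase hX (treeRel_unique hrel (treeRel_iff.2 ⟨k, hbk, rfl⟩))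
      · rw [sup_succ_insert hbk] at hU
        rw [Finset.insert_union, ← Finset.union_insert]
        refine Finset.mem_erase.2 ⟨fun h => hkT (h ▸ Finset.mem_union_right T
          (Finset.mem_insert_self k U)), hdesc _ (Finset.insert_subset hk ?_)⟩
        exact hU.trans (Finset.Ico_subset_Ico_left (hbk.trans (Nat.le_succ k)))
    rw [geo_of_mem _ hT, filter_treeGraph_adj_erase hA hparent hdesc, Finset.image_image,
      Finset.image_congr (f := geo treeGraph (A.erase T) ∘ (insert · T)) hval,
      image_Ico_tsub_succ, mex_range]

end Descendants

end Tree

section Plus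

variable {V : Type} (G : SimpleGraph V) (s : V)

lemma plusGraph_adj {u w : PlusV V} :
    (plusGraph G s).Adj u w ↔ u ≠ w ∧ (plusRel G s u w ∨ plusRel G s w u) :=
  Iff.rfl

def plusInl : G ↪g plusGraph G s where
  toFun := Sum.inl
  inj' := Sum.inl_injective
  map_rel_iff' {a b} := by
    simp only [plusGraph, plusRel, Function.Embedding.coeFn_mk, ne_eq, Sum.inl.injEq,
      G.adj_comm b a, or_self]
    exact ⟨And.right, fun h => ⟨G.ne_of_adj h, h⟩⟩

def plusTree (m : ℕ) : treeGraph ↪g plusGraph G s where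
  toFun T := Sum.inr (Sum.inr (m, T))
  inj' _ _ h := by simpa using h
  map_rel_iff' {a b} := by
    change _ ≠ _ ∧ ((m = m ∧ treeRel a b) ∨ (m = m ∧ treeRel b a)) ↔
      a ≠ b ∧ (treeRel a b ∨ treeRel b a)
    simp

@[simp]
lemma plusInl_apply (u : V) : plusInl G s u = Sum.inl u :=
  rfl

@[simp]
lemma plusTree_apply (m : ℕ) (T : Finset ℕ) : plusTree G s m T = Sum.inr (Sum.inr (m, T)) :=
  rfl

variable [Fintype V] [DecidableEq V] [DecidableRel G.Adj] (S : Finset ℕ)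

@[simp]
lemma inl_mem_plusVerts (u : V) : (Sum.inl u : PlusV V) ∈ plusVerts V S := by
  simp [plusVerts]

@[simp]
lemma inr_inl_mem_plusVerts : (Sum.inr (Sum.inl ()) : PlusV V) ∈ plusVerts V S := by
  simp [plusVerts]

@[simp]
lemma inr_inr_mem_plusVerts (m : ℕ) (T : Finset ℕ) :
    (Sum.inr (Sum.inr (m, T)) : PlusV V) ∈ plusVerts V S ↔
      m ∈ S ∧ T ⊆ Finset.range m := by
  simp [plusVerts]

lemma plusVerts_erase_filter_adj :
    ((plusVerts V S).erase (Sum.inr (Sum.inl ()))).filter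
        ((plusGraph G s).Adj (Sum.inr (Sum.inl ()))) =
      insert (Sum.inl s) (S.image fun m => Sum.inr (Sum.inr (m, ∅))) := by
  ext (u | u | ⟨m, T⟩) <;> simp [plusGraph_adj, plusRel, @eq_comm _ ∅]
  exact fun hT _ => hT ▸ Finset.empty_subset _

lemma geo_plusGraph_inl :
    geo (plusGraph G s) ((plusVerts V S).erase (Sum.inr (Sum.inl ()))) (Sum.inl s) =
      geo G Finset.univ s := by
  rw [geo_eq_of_subset (plusGraph G s) (B := Finset.univ.map (plusInl G s).toEmbedding)]
  · exact geo_map G (plusGraph G s) (plusInl G s) Finset.univ s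
  · intro x hx
    obtain ⟨a, -, rfl⟩ := Finset.mem_map.1 hx
    simp
  · intro x hx w hw hadj
    obtain ⟨a, -, rfl⟩ := Finset.mem_map.1 hx
    rcases w with b | ⟨⟩ | ⟨m, T⟩
    · simp
    · simp at hw
    · simp [plusGraph_adj, plusRel] at hadj
  · simp

lemma geo_plusGraph_root {m : ℕ} (hm : m ∈ S) :
    geo (plusGraph G s) ((plusVerts V S).erase (Sum.inr (Sum.inl ())))
      (Sum.inr (Sum.inr (m, ∅))) = m := by
  rw [geo_eq_of_subset (plusGraph G s)
    (B := (Finset.range m).powerset.map (plusTree G s m).toEmbedding)]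
  · refine (geo_map treeGraph (plusGraph G s) (plusTree G s m) _ ∅).trans ?_
    rw [geo_treeGraph (n := m) (Finset.empty_mem_powerset _)
      (fun X hX => Finset.mem_powerset.1 hX) (fun X _ h => ?_) (fun U hU => ?_)]
    · simp
    · obtain ⟨k, -, h⟩ := treeRel_iff.1 h
      exact Finset.insert_ne_empty k X h.symm
    · simpa using hU
  · intro x hx
    obtain ⟨a, ha, rfl⟩ := Finset.mem_map.1 hx
    simpa [hm] using ha
  · intro x hx w hw hadj
    obtain ⟨a, -, rfl⟩ := Finset.mem_map.1 hx
    rcases w with b | ⟨⟩ | ⟨m', T⟩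
    · simp [plusGraph_adj, plusRel] at hadj
    · simp at hw
    · obtain ⟨-, hT⟩ := (inr_inr_mem_plusVerts S m' T).1 (Finset.mem_of_mem_erase hw)
      obtain rfl : m = m' := by
        simp only [RelEmbedding.coe_toEmbedding, plusTree_apply, plusGraph_adj, plusRel]
          at hadj
        tauto
      simpa using hT
  · simp

end Plus

/-- let `G⁺` be obtained from `G` by adding a new vertex `v` adjacent to `s`
and, for each `m ∈ S`, a fresh disjoint copy of the tree `t(m)` with `v` joined to its
root.  Then `g(G⁺, v) = mex (S ∪ {g(G,s)})`. -/
theorem stmt12 {V : Type} [Fintype V] [DecidableEq V]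
    (G : SimpleGraph V) [DecidableRel G.Adj] (s : V) (S : Finset ℕ) :
    geo (plusGraph G s) (plusVerts V S) (Sum.inr (Sum.inl ())) =
      mex (insert (geo G Finset.univ s) S) := by
  have hroots : (S.image fun m => (Sum.inr (Sum.inr (m, ∅)) : PlusV V)).image
      (geo (plusGraph G s) ((plusVerts V S).erase (Sum.inr (Sum.inl ())))) = S := by
    rw [Finset.image_image]
    exact (Finset.image_congr fun m hm => geo_plusGraph_root G s S hm).trans Finset.image_id
  rw [geo_of_mem _ (inr_inl_mem_plusVerts S), plusVerts_erase_filter_adj, Finset.image_insert,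
    geo_plusGraph_inl, hroots]
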